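/- arXiv:2012.04601 — 5 statements merged into one kernel-verified Lean document; each statement's English description precedes it below -/
import Mathlib

section
/- Let M be an n×n real matrix, let D be the diagonal matrix with the same diagonal entries as M, and for a real number t let M_t = M + (t − 1)·D (so the diagonal of M is scaled by t and the off-diagonal entries are unchanged). Then for every index i ≤ n there exists a real polynomial P_i of degree at most n − i such that for all real t, the coefficient of x^i in the characteristic polynomial of M_t equals P_i evaluated at t. -/
/-!
Over `ℝ[t]`, the matrix `M_t = t • D + (M - D)` is a pencil `X • A + B`. Up to sign, the coefficient
of `x ^ (n - k)` in its characteristic polynomial is the sum of its `k × k` principal minors, and each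
of these is the determinant of a `k × k` pencil, hence has degree at most `k` in `t`.
-/

open Matrix Polynomial

namespace Matrix

variable {R : Type*} [CommRing R]

theorem map_evalRingHom_X_smul_add_C {m n : Type*} (A B : Matrix m n R) (t : R) :
    ((X : R[X]) • A.map C + B.map C).map (evalRingHom t) = t • A + B := by
  ext a b
  simp only [map_apply, add_apply, smul_apply, smul_eq_mul, coe_evalRingHom, eval_add, eval_mul,
    eval_X, eval_C]

theorem natDegree_charpoly_coeff_X_smul_add_C_le {n : Type*} [Fintype n] [DecidableEq n]
    (A B : Matrix n n R) (i : ℕ) :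
    (((X : R[X]) • A.map C + B.map C).charpoly.coeff i).natDegree ≤ Fintype.card n - i := by
  nontriviality R
  rcases le_or_gt i (Fintype.card n) with hi | hi
  · obtain ⟨k, hk, rfl⟩ : ∃ k ≤ Fintype.card n, i = Fintype.card n - k :=
      ⟨Fintype.card n - i, Nat.sub_le _ _, (Nat.sub_sub_self hi).symm⟩
    rw [charpoly_coeff_eq_sum_minors _ _ hk, Nat.sub_sub_self hk]
    refine (natDegree_mul_le_of_le (n := k) (natDegree_pow_le_of_le k (natDegree_neg_le_of_le
      natDegree_one.le)) (natDegree_sum_le_of_forall_le _ _ fun s hs => ?_)).trans (by simp)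
    rw [← (Finset.mem_powersetCard.mp hs).2, ← Fintype.card_coe]
    exact natDegree_det_X_add_C_le (A.submatrix _ _) (B.submatrix _ _)
  · rw [coeff_eq_zero_of_natDegree_lt (by rwa [charpoly_natDegree_eq_dim]), natDegree_zero]
    exact Nat.zero_le _

end Matrix

theorem stmt_0_general (n : ℕ) (M : Matrix (Fin n) (Fin n) ℝ)
    (D : Matrix (Fin n) (Fin n) ℝ) :
    ∀ i ≤ n, ∃ P : Polynomial ℝ, P.natDegree ≤ n - i ∧
      ∀ t : ℝ, (M + (t - 1) • D).charpoly.coeff i = P.eval t := by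
  intro i _
  set N : Matrix (Fin n) (Fin n) ℝ[X] := (X : ℝ[X]) • D.map C + (M - D).map C
  refine ⟨N.charpoly.coeff i, by simpa using natDegree_charpoly_coeff_X_smul_add_C_le D (M - D) i,
    fun t => ?_⟩
  have hN : N.map (evalRingHom t) = M + (t - 1) • D := by
    rw [map_evalRingHom_X_smul_add_C, sub_smul, one_smul]
    abel
  rw [← hN, charpoly_map, coeff_map, coe_evalRingHom]

theorem stmt_0 (n : ℕ) (M : Matrix (Fin n) (Fin n) ℝ)
    (D : Matrix (Fin n) (Fin n) ℝ) (hD : D = Matrix.diagonal (fun i => M i i)) :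
    ∀ i ≤ n, ∃ P : Polynomial ℝ, P.natDegree ≤ n - i ∧
      ∀ t : ℝ, (M + (t - 1) • D).charpoly.coeff i = P.eval t :=
  stmt_0_general n M D
end

section
/- Let M be an n×n real matrix all of whose diagonal entries are strictly negative, let D be the diagonal matrix with the same diagonal entries as M, and for a real number t let M_t = M + (t − 1)·D. For each i ≤ n − 1, the polynomial P_i in t giving the coefficient of x^i in the characteristic polynomial of M_t has degree exactly n − i and its leading coefficient is strictly positive. -/
/-!
Write `M_t = (M - D) + t • D`. By the principal-minor expansion of the characteristic polynomial,
the coefficient of `x ^ i` in `charpoly M_t` is `(-1) ^ (n - i)` times the sum of the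
`(n - i) × (n - i)` principal minors of `M_t`. Each such minor is a polynomial in `t` of degree at
most `n - i`, and its `t ^ (n - i)`-coefficient is the corresponding principal minor of `D`, a
product of `n - i` diagonal entries of `M`. After the sign, the top coefficient of the whole sum
is a sum of products of the positive numbers `-M j j`.
-/

open Matrix Polynomial Finset

namespace Matrix

variable {ι : Type*} [Fintype ι] [DecidableEq ι]

section CommRing

variable {R : Type*} [CommRing R]

theorem eval_det_X_smul_add_C (A B : Matrix ι ι R) (t : R) :
    (det ((X : R[X]) • B.map C + A.map C)).eval t = det (A + t • B) := by
  rw [← coe_evalRingHom, RingHom.map_det]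
  congr 1
  ext i j
  simp only [RingHom.mapMatrix_apply, map_apply, add_apply, smul_apply, smul_eq_mul,
    coe_evalRingHom, eval_add, eval_mul, eval_X, eval_C]
  ring

noncomputable def pencilCharpolyCoeff (A B : Matrix ι ι R) (k : ℕ) : R[X] :=
  C ((-1) ^ k) * ∑ s ∈ univ.powersetCard k,
    det ((X : R[X]) • (B.submatrix (Subtype.val : s → ι) Subtype.val).map C +
      (A.submatrix (Subtype.val : s → ι) Subtype.val).map C)

theorem eval_pencilCharpolyCoeff (A B : Matrix ι ι R) {k : ℕ} (hk : k ≤ Fintype.card ι)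
    (t : R) :
    (pencilCharpolyCoeff A B k).eval t = (A + t • B).charpoly.coeff (Fintype.card ι - k) := by
  simp only [pencilCharpolyCoeff, charpoly_coeff_eq_sum_minors _ _ hk, eval_mul, eval_C,
    eval_finsetSum, eval_det_X_smul_add_C]
  rfl

theorem natDegree_pencilCharpolyCoeff_le (A B : Matrix ι ι R) (k : ℕ) :
    (pencilCharpolyCoeff A B k).natDegree ≤ k := by
  refine (natDegree_C_mul_le _ _).trans (natDegree_sum_le_of_forall_le _ _ fun s hs => ?_)
  simpa [(mem_powersetCard.mp hs).2] using natDegree_det_X_add_C_le (n := s) (α := R) _ _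

theorem coeff_pencilCharpolyCoeff_self (A B : Matrix ι ι R) (k : ℕ) :
    (pencilCharpolyCoeff A B k).coeff k =
      (-1) ^ k * ∑ s ∈ univ.powersetCard k,
        det (B.submatrix (Subtype.val : s → ι) Subtype.val) := by
  rw [pencilCharpolyCoeff, coeff_C_mul, finsetSum_coeff]
  congr 1
  refine sum_congr rfl fun s hs => ?_
  simpa [(mem_powersetCard.mp hs).2] using coeff_det_X_add_C_card (n := s) (α := R) _ _

theorem coeff_pencilCharpolyCoeff_diagonal_self (A : Matrix ι ι R) (d : ι → R) (k : ℕ) :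
    (pencilCharpolyCoeff A (diagonal d) k).coeff k =
      ∑ s ∈ univ.powersetCard k, ∏ j ∈ s, -d j := by
  rw [coeff_pencilCharpolyCoeff_self, mul_sum]
  refine sum_congr rfl fun s hs => ?_
  rw [submatrix_diagonal _ _ Subtype.val_injective, det_diagonal, prod_neg,
    (mem_powersetCard.mp hs).2]
  exact congrArg _ (prod_coe_sort s d)

end CommRing

theorem natDegree_pencilCharpolyCoeff_diagonal_of_neg {R : Type*} [CommRing R] [LinearOrder R]
    [IsStrictOrderedRing R] (A : Matrix ι ι R) {d : ι → R} (hd : ∀ j, d j < 0) {k : ℕ}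
    (hk : k ≤ Fintype.card ι) :
    (pencilCharpolyCoeff A (diagonal d) k).natDegree = k ∧
      0 < (pencilCharpolyCoeff A (diagonal d) k).leadingCoeff := by
  have hpos : 0 < (pencilCharpolyCoeff A (diagonal d) k).coeff k := by
    rw [coeff_pencilCharpolyCoeff_diagonal_self]
    exact sum_pos (fun s _ => prod_pos fun j _ => neg_pos.mpr (hd j))
      (powersetCard_nonempty.mpr (by rwa [card_univ]))
  have hdeg : (pencilCharpolyCoeff A (diagonal d) k).natDegree = k :=
    (natDegree_pencilCharpolyCoeff_le A _ k).antisymm (le_natDegree_of_ne_zero hpos.ne')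
  exact ⟨hdeg, by rwa [leadingCoeff, hdeg]⟩

end Matrix

theorem stmt_3 (n : ℕ) (M : Matrix (Fin n) (Fin n) ℝ)
    (hdiag : ∀ i, M i i < 0)
    (D : Matrix (Fin n) (Fin n) ℝ) (hD : D = Matrix.diagonal (fun i => M i i)) :
    ∀ i ≤ n - 1, ∀ P : Polynomial ℝ,
      (∀ t : ℝ, P.eval t = (M + (t - 1) • D).charpoly.coeff i) →
      P.natDegree = n - i ∧ 0 < P.leadingCoeff := by
  intro i hi P hP
  have hk : n - i ≤ Fintype.card (Fin n) := by simp
  have hPeq : P = pencilCharpolyCoeff (M - D) D (n - i) := by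
    refine Polynomial.funext fun t => ?_
    rw [hP, eval_pencilCharpolyCoeff _ _ hk, Fintype.card_fin, Nat.sub_sub_self (by omega),
      sub_smul, one_smul]
    congr 2
    abel
  subst hD hPeq
  exact natDegree_pencilCharpolyCoeff_diagonal_of_neg _ hdiag hk
end

section
/- Let M be an n×n real matrix (n ≥ 1) all of whose diagonal entries are strictly negative, let D be the diagonal matrix with the same diagonal entries as M, and for a real number t let M_t = M + (t − 1)·D. Then there exists a real number σ₀ such that for every real σ ≥ σ₀, every complex root of the characteristic polynomial of M_σ (i.e., every complex eigenvalue of M_σ) has strictly negative real part. -/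
/-!
By Gershgorin's circle theorem every eigenvalue of `M_σ` lies in a disc centred at some
diagonal entry `σ * M k k` with radius the off-diagonal row sum `∑ j ≠ k, |M k j|`, which does
not depend on `σ`. Since `M k k < 0`, for `σ` large each of these discs lies in the open left
half-plane.
-/

open Matrix Polynomial Filter

section Gershgorin

variable {ι : Type*} [Fintype ι] [DecidableEq ι]

theorem Matrix.hasEigenvalue_toLin'_of_isRoot_charpoly_map {K L : Type*} [Field K] [Field L]
    (f : K →+* L) (A : Matrix ι ι K) {z : L} (hz : (A.charpoly.map f).IsRoot z) :
    Module.End.HasEigenvalue (A.map f).toLin' z := by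
  rwa [Module.End.hasEigenvalue_iff_isRoot_charpoly, Matrix.charpoly_toLin', Matrix.charpoly_map]

theorem Matrix.re_neg_of_hasEigenvalue_of_rowDominant {A : Matrix ι ι ℂ}
    (hA : ∀ k, (A k k).re + ∑ j ∈ Finset.univ.erase k, ‖A k j‖ < 0) {z : ℂ}
    (hz : Module.End.HasEigenvalue A.toLin' z) : z.re < 0 := by
  obtain ⟨k, hk⟩ := eigenvalue_mem_ball hz
  have hre : z.re - (A k k).re ≤ dist z (A k k) := by
    rw [Complex.dist_eq, ← Complex.sub_re]
    exact Complex.re_le_norm _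
  linarith [Metric.mem_closedBall.mp hk, hA k]

theorem Matrix.re_neg_of_isRoot_charpoly_of_rowDominant {B : Matrix ι ι ℝ}
    (hB : ∀ k, B k k + ∑ j ∈ Finset.univ.erase k, |B k j| < 0) {z : ℂ}
    (hz : (B.charpoly.map (algebraMap ℝ ℂ)).IsRoot z) : z.re < 0 := by
  refine re_neg_of_hasEigenvalue_of_rowDominant (fun k => ?_)
    (hasEigenvalue_toLin'_of_isRoot_charpoly_map _ B hz)
  simpa [Complex.norm_real] using hB k

end Gershgorin

section DiagonalScaling

variable {ι : Type*} [DecidableEq ι]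

theorem Matrix.add_smul_diagonal_diag_apply_self (M : Matrix ι ι ℝ) (t : ℝ) (k : ι) :
    (M + (t - 1) • diagonal fun i => M i i) k k = t * M k k := by
  simp only [add_apply, smul_apply, diagonal_apply_eq, smul_eq_mul]
  ring

theorem Matrix.add_smul_diagonal_diag_apply_of_ne (M : Matrix ι ι ℝ) (t : ℝ) {k j : ι}
    (h : k ≠ j) : (M + (t - 1) • diagonal fun i => M i i) k j = M k j := by
  simp [diagonal_apply_ne _ h]

variable [Fintype ι]

theorem Matrix.eventually_rowDominant_add_smul_diagonal (M : Matrix ι ι ℝ)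
    (hM : ∀ i, M i i < 0) :
    ∀ᶠ t : ℝ in atTop, ∀ k, (M + (t - 1) • diagonal fun i => M i i) k k +
      ∑ j ∈ Finset.univ.erase k, |(M + (t - 1) • diagonal fun i => M i i) k j| < 0 := by
  refine eventually_all.mpr fun k => ?_
  set r := ∑ j ∈ Finset.univ.erase k, |M k j|
  filter_upwards [eventually_gt_atTop (r / -M k k)] with t ht
  have hr : r < t * -M k k := (div_lt_iff₀ (neg_pos.mpr (hM k))).mp ht
  rw [add_smul_diagonal_diag_apply_self, Finset.sum_congr rfl fun j hj =>
    congrArg abs (add_smul_diagonal_diag_apply_of_ne M t (Finset.ne_of_mem_erase hj).symm)]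
  linarith

end DiagonalScaling

theorem stmt_4_general (n : ℕ) (M : Matrix (Fin n) (Fin n) ℝ)
    (hdiag : ∀ i, M i i < 0)
    (D : Matrix (Fin n) (Fin n) ℝ) (hD : D = Matrix.diagonal (fun i => M i i)) :
    ∃ σ₀ : ℝ, ∀ σ : ℝ, σ₀ ≤ σ →
      ∀ z : ℂ, ((M + (σ - 1) • D).charpoly.map (algebraMap ℝ ℂ)).IsRoot z →
        z.re < 0 := by
  subst hD
  obtain ⟨σ₀, hσ₀⟩ := eventually_atTop.mp (eventually_rowDominant_add_smul_diagonal M hdiag)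
  exact ⟨σ₀, fun σ hσ _ hz => re_neg_of_isRoot_charpoly_of_rowDominant (hσ₀ σ hσ) hz⟩

theorem stmt_4 (n : ℕ) (hn : 1 ≤ n) (M : Matrix (Fin n) (Fin n) ℝ)
    (hdiag : ∀ i, M i i < 0)
    (D : Matrix (Fin n) (Fin n) ℝ) (hD : D = Matrix.diagonal (fun i => M i i)) :
    ∃ σ₀ : ℝ, ∀ σ : ℝ, σ₀ ≤ σ →
      ∀ z : ℂ, ((M + (σ - 1) • D).charpoly.map (algebraMap ℝ ℂ)).IsRoot z →
        z.re < 0 :=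
  stmt_4_general n M hdiag D hD
end

section
/- Let p be a monic polynomial with real coefficients such that every complex root of p (viewed as a polynomial over ℂ) has real part at most 0. Then every coefficient of p is nonnegative. -/
/-!
A monic irreducible real polynomial with a complex root `z` is `X - z` if `z` is real and
`X ^ 2 - 2 z.re X + ‖z‖ ^ 2` otherwise, since it is divisible by that monic polynomial. When
`z.re ≤ 0` both have nonnegative coefficients, and polynomials with nonnegative coefficients form a
subsemiring; so it suffices to factor `p` into monic irreducibles.
-/

open Polynomial

namespace Polynomial

theorem Monic.eq_of_dvd_of_irreducible {R : Type*} [Semiring R] {f g : R[X]}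
    (hg : g.Monic) (hf : f.Monic) (hirr : Irreducible f) (hunit : ¬IsUnit g) (hgf : g ∣ f) :
    g = f :=
  eq_of_monic_of_associated hg hf ((hirr.dvd_iff.mp hgf).resolve_left hunit).symm

variable {R : Type*} [Semiring R] [PartialOrder R] [IsOrderedRing R]

variable (R) in
def nonnegCoeffs : Subsemiring R[X] where
  carrier := {p | ∀ i, 0 ≤ p.coeff i}
  zero_mem' _ := by simp
  one_mem' i := by rw [coeff_one]; split_ifs <;> simp
  add_mem' hp hq i := by rw [coeff_add]; exact add_nonneg (hp i) (hq i)
  mul_mem' hp hq i := by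
    rw [coeff_mul]; exact Finset.sum_nonneg fun x _ => mul_nonneg (hp _) (hq _)

theorem mem_nonnegCoeffs {p : R[X]} : p ∈ nonnegCoeffs R ↔ ∀ i, 0 ≤ p.coeff i := Iff.rfl

theorem X_mem_nonnegCoeffs : (X : R[X]) ∈ nonnegCoeffs R := fun i => by
  rw [coeff_X]; split_ifs <;> simp

theorem C_mem_nonnegCoeffs {a : R} (ha : 0 ≤ a) : C a ∈ nonnegCoeffs R := fun i => by
  rw [coeff_C]; split_ifs <;> simp [ha]

theorem mem_nonnegCoeffs_of_irreducible_of_re_nonpos {f : ℝ[X]} (hirr : Irreducible f)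
    (hmonic : f.Monic) {z : ℂ} (hz : (f.map (algebraMap ℝ ℂ)).IsRoot z) (hre : z.re ≤ 0) :
    f ∈ nonnegCoeffs ℝ := by
  rcases eq_or_ne z.im 0 with him | him
  · have hroot : f.IsRoot z.re := by
      rw [← Complex.ext_iff.mpr ⟨Complex.ofReal_re _, him.symm⟩] at hz
      exact hz.of_map (algebraMap ℝ ℂ).injective
    have hf : X - C z.re = f :=
      (monic_X_sub_C _).eq_of_dvd_of_irreducible hmonic hirr (not_isUnit_X_sub_C _)
        (dvd_iff_isRoot.mpr hroot)
    rw [← hf, sub_eq_add_neg, ← C_neg]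
    exact add_mem X_mem_nonnegCoeffs (C_mem_nonnegCoeffs (neg_nonneg.mpr hre))
  · have haeval : aeval z f = 0 := by rwa [aeval_def, eval₂_eq_eval_map]
    have hmonic' : (X ^ 2 - C (2 * z.re) * X + C (‖z‖ ^ 2)).Monic := by monicity!
    have hdeg : (X ^ 2 - C (2 * z.re) * X + C (‖z‖ ^ 2)).natDegree = 2 := by compute_degree!
    have hf := hmonic'.eq_of_dvd_of_irreducible hmonic hirr
      (not_isUnit_of_natDegree_pos _ (by omega))
      (f.quadratic_dvd_of_aeval_eq_zero_im_ne_zero haeval him)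
    rw [← hf, sub_eq_add_neg, ← neg_mul, ← C_neg]
    refine add_mem (add_mem (pow_mem X_mem_nonnegCoeffs 2)
      (mul_mem (C_mem_nonnegCoeffs (by linarith)) X_mem_nonnegCoeffs))
      (C_mem_nonnegCoeffs (by positivity))

end Polynomial

open UniqueFactorizationMonoid in
theorem stmt_6 (p : Polynomial ℝ) (hmonic : p.Monic)
    (hroots : ∀ z : ℂ, (p.map (algebraMap ℝ ℂ)).IsRoot z → z.re ≤ 0) :
    ∀ i, 0 ≤ p.coeff i := by
  classical
  have hprod : (normalizedFactors p).prod = p := by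
    have := leadingCoeff_mul_prod_normalizedFactors p
    rwa [hmonic.leadingCoeff, C_1, one_mul] at this
  apply mem_nonnegCoeffs.mp
  rw [← hprod]
  refine Subsemiring.multiset_prod_mem _ _ fun f hf => ?_
  obtain ⟨hirr, hfmonic, hfp⟩ := (Polynomial.mem_normalizedFactors_iff hmonic.ne_zero).mp hf
  obtain ⟨z, hz⟩ := Complex.exists_root (f := f.map (algebraMap ℝ ℂ))
    (by rw [degree_map]; exact degree_pos_of_irreducible hirr)
  exact mem_nonnegCoeffs_of_irreducible_of_re_nonpos hirr hfmonic hz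
    (hroots z (hz.dvd (Polynomial.map_dvd (algebraMap ℝ ℂ) hfp)))
end

section
/- Let A be an n×n real matrix (n ≥ 1) such that every complex root of its characteristic polynomial has strictly negative real part. Then every coefficient of the characteristic polynomial of A (the coefficients of x^0 through x^n) is strictly positive. -/
/-!
Every complex root `z` of a real polynomial `p` yields a real factor of `p`: `X - z` if `z` is
real, and `X² - 2 Re z · X + |z|²` otherwise. When `Re z < 0` these factors have positive
coefficients, and a product of polynomials with positive coefficients again has positive
coefficients, since its coefficients are sums of nonnegative terms of which at least one is
positive. Induction on the degree then gives the claim for any Hurwitz stable real polynomial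
(all complex roots in the open left half-plane) with positive leading coefficient.
-/

open Matrix Polynomial

namespace Polynomial

def IsHurwitzStable (p : ℝ[X]) : Prop :=
  ∀ z : ℂ, (p.map (algebraMap ℝ ℂ)).IsRoot z → z.re < 0

def HasPosCoeffs (p : ℝ[X]) : Prop :=
  ∀ i ≤ p.natDegree, 0 < p.coeff i

theorem IsHurwitzStable.of_dvd {p q : ℝ[X]} (hp : p.IsHurwitzStable) (hqp : q ∣ p) :
    q.IsHurwitzStable :=
  fun z hz => hp z (hz.dvd (map_dvd _ hqp))

namespace HasPosCoeffs

theorem coeff_nonneg {p : ℝ[X]} (hp : p.HasPosCoeffs) (i : ℕ) : 0 ≤ p.coeff i := by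
  rcases le_or_gt i p.natDegree with hi | hi
  · exact (hp i hi).le
  · rw [coeff_eq_zero_of_natDegree_lt hi]

theorem ne_zero {p : ℝ[X]} (hp : p.HasPosCoeffs) : p ≠ 0 := by
  rintro rfl
  simpa using hp 0 le_rfl

theorem mul {p q : ℝ[X]} (hp : p.HasPosCoeffs) (hq : q.HasPosCoeffs) :
    (p * q).HasPosCoeffs := by
  intro k hk
  rw [natDegree_mul hp.ne_zero hq.ne_zero] at hk
  rw [coeff_mul]
  refine Finset.sum_pos' (fun x _ => mul_nonneg (hp.coeff_nonneg _) (hq.coeff_nonneg _)) ?_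
  refine ⟨(min k p.natDegree, k - min k p.natDegree), ?_, ?_⟩
  · rw [Finset.HasAntidiagonal.mem_antidiagonal]; omega
  · exact mul_pos (hp _ (min_le_right _ _)) (hq _ (by omega))

end HasPosCoeffs

theorem hasPosCoeffs_X_sub_C {a : ℝ} (ha : a < 0) : (X - C a).HasPosCoeffs := by
  intro i hi
  rw [natDegree_X_sub_C] at hi
  interval_cases i <;> simp [ha]

theorem natDegree_X_pow_two_sub_C_mul_X_add_C (b c : ℝ) :
    (X ^ 2 - C b * X + C c).natDegree = 2 := by
  compute_degree!

theorem hasPosCoeffs_X_pow_two_sub_C_mul_X_add_C {b c : ℝ} (hb : b < 0) (hc : 0 < c) :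
    (X ^ 2 - C b * X + C c).HasPosCoeffs := by
  intro i hi
  rw [natDegree_X_pow_two_sub_C_mul_X_add_C] at hi
  interval_cases i <;> simp [coeff_X, coeff_C, hb, hc]

theorem exists_hasPosCoeffs_dvd_of_isRoot {p : ℝ[X]} (hp : p.IsHurwitzStable) {z : ℂ}
    (hz : (p.map (algebraMap ℝ ℂ)).IsRoot z) :
    ∃ d : ℝ[X], d.HasPosCoeffs ∧ 0 < d.natDegree ∧ d ∣ p := by
  have hre := hp z hz
  by_cases him : z.im = 0
  · have hzre : algebraMap ℝ ℂ z.re = z := Complex.ext rfl (by simp [him])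
    refine ⟨X - C z.re, hasPosCoeffs_X_sub_C hre, by simp, dvd_iff_isRoot.mpr ?_⟩
    exact (hzre ▸ hz).of_map (algebraMap ℝ ℂ).injective
  · have haeval : aeval z p = 0 := by rwa [aeval_def, eval₂_eq_eval_map]
    have hz0 : z ≠ 0 := by rintro rfl; simp at him
    refine ⟨_, hasPosCoeffs_X_pow_two_sub_C_mul_X_add_C (by linarith) (by positivity), ?_,
      quadratic_dvd_of_aeval_eq_zero_im_ne_zero p haeval him⟩
    rw [natDegree_X_pow_two_sub_C_mul_X_add_C]; exact two_pos

theorem IsHurwitzStable.hasPosCoeffs {p : ℝ[X]} (hp : p.IsHurwitzStable)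
    (hlc : 0 < p.leadingCoeff) : p.HasPosCoeffs := by
  induction hdeg : p.natDegree using Nat.strong_induction_on generalizing p with
  | _ n ih =>
  rcases Nat.eq_zero_or_pos n with rfl | hn
  · intro i hi
    rw [hdeg, Nat.le_zero] at hi
    subst hi
    rwa [leadingCoeff, hdeg] at hlc
  obtain ⟨z, hz⟩ : ∃ z, (p.map (algebraMap ℝ ℂ)).IsRoot z := Complex.exists_root <| by
    rw [← natDegree_pos_iff_degree_pos, natDegree_map]; omega
  obtain ⟨d, hd, hd_deg, q, rfl⟩ := exists_hasPosCoeffs_dvd_of_isRoot hp hz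
  have hq0 : q ≠ 0 := by rintro rfl; simp at hlc
  have hq_lc : 0 < q.leadingCoeff := by
    rw [leadingCoeff_mul] at hlc
    exact (pos_iff_pos_of_mul_pos hlc).mp (hd _ le_rfl)
  have hq_deg : q.natDegree < n := by
    rw [← hdeg, natDegree_mul hd.ne_zero hq0]; omega
  exact hd.mul (ih _ hq_deg (hp.of_dvd (dvd_mul_left q d)) hq_lc rfl)

end Polynomial

theorem stmt_8_general (n : ℕ) (A : Matrix (Fin n) (Fin n) ℝ)
    (hroots : ∀ z : ℂ, (A.charpoly.map (algebraMap ℝ ℂ)).IsRoot z → z.re < 0) :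
    ∀ i ≤ n, 0 < A.charpoly.coeff i := by
  have hpos : A.charpoly.HasPosCoeffs :=
    IsHurwitzStable.hasPosCoeffs hroots (by rw [(charpoly_monic A).leadingCoeff]; exact one_pos)
  intro i hi
  exact hpos i (by rwa [charpoly_natDegree_eq_dim, Fintype.card_fin])

theorem stmt_8 (n : ℕ) (hn : 1 ≤ n) (A : Matrix (Fin n) (Fin n) ℝ)
    (hroots : ∀ z : ℂ, (A.charpoly.map (algebraMap ℝ ℂ)).IsRoot z → z.re < 0) :
    ∀ i ≤ n, 0 < A.charpoly.coeff i :=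
  stmt_8_general n A hroots
end
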